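/- Let G = (V1, V2, E) be a bipartite graph with |V1| = |V2| = n and E ≠ ∅, let Ḡ be its co-bipartite complement, and assume Ḡ is connected. Let k be the size of a maximum balanced bipartite clique of G, and assume k ≥ 1. Then τ̂(Ḡ) ≤ 2(n/k − 1). -/

import Mathlib

open SimpleGraph

/-- The number of vertices of a largest connected component of the subgraph of `G`
induced on the vertex set `T`. -/
noncomputable def maxCompCard {V : Type*} [Fintype V] (G : SimpleGraph V) (T : Set V) : ℕ :=
  sSup (Set.range fun C : (G.induce T).ConnectedComponent => Nat.card C.supp)

/-- The unsmoothened vertex attack tolerance `τ̂(G)`: the infimum over nonempty attack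
sets `S` whose removal leaves at least one vertex outside the largest remaining component,
of `|S| / (|V ∖ S| - |C_max(V - S)|)`. -/
noncomputable def uvat {V : Type*} [Fintype V] [DecidableEq V] (G : SimpleGraph V) : ℝ :=
  sInf {x : ℝ | ∃ S : Finset V, S.Nonempty ∧
    maxCompCard G ((S : Set V))ᶜ < Sᶜ.card ∧
    x = (S.card : ℝ) / ((Sᶜ.card : ℝ) - (maxCompCard G ((S : Set V))ᶜ : ℝ))}

/-- The co-bipartite complement of a bipartite graph with parts `α`, `β` and edge
relation `E : α → β → Prop`: both parts become cliques, and a cross pair is an edge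
iff it is not an edge of the bipartite graph. -/
def cobip {α β : Type*} (E : α → β → Prop) : SimpleGraph (α ⊕ β) where
  Adj x y :=
    match x, y with
    | Sum.inl a, Sum.inl a' => a ≠ a'
    | Sum.inr b, Sum.inr b' => b ≠ b'
    | Sum.inl a, Sum.inr b => ¬ E a b
    | Sum.inr b, Sum.inl a => ¬ E a b
  symm := by
    constructor
    rintro (a | b) (a' | b') h
    · exact Ne.symm h
    · exact h
    · exact h
    · exact Ne.symm h
  loopless := by
    constructor
    rintro (a | b) h
    · exact h rfl
    · exact h rfl

/-- `G` (with edge relation `E`) contains a balanced bipartite clique of size `k`: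
sets `A ⊆ V₁`, `B ⊆ V₂` with `|A| = |B| = k` and all pairs adjacent. -/
def isBalancedClique {α β : Type*} (E : α → β → Prop) (k : ℕ) : Prop :=
  ∃ (A : Finset α) (B : Finset β), A.card = k ∧ B.card = k ∧ ∀ a ∈ A, ∀ b ∈ B, E a b

/-!
Remove from `Ḡ` everything outside a balanced biclique `A ∪ B` of `G` with `|A| = |B| = k`.
Inside `A ∪ B` the graph `Ḡ` has no cross edges, so what is left is two disjoint `k`-cliques:
the largest component has `k` of the `2k` surviving vertices, and the attack set of size
`2n - 2k` gives the ratio `(2n - 2k) / k = 2 (n / k - 1)`. Connectedness of `Ḡ` excludes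
`k = n`, so the attack set is nonempty.
-/

open Finset

namespace SimpleGraph

variable {V : Type*}

lemma Reachable.eq_of_forall_adj {γ : Type*} {G : SimpleGraph V} {f : V → γ}
    (hf : ∀ x y, G.Adj x y → f x = f y) {u v : V} (h : G.Reachable u v) : f u = f v := by
  obtain ⟨w⟩ := h
  induction w with
  | nil => rfl
  | cons hadj _ ih => exact (hf _ _ hadj).trans ih

lemma maxCompCard_eq_of_forall_card_supp_eq [Fintype V] {G : SimpleGraph V} {T : Set V}
    [Nonempty T] {k : ℕ} (h : ∀ C : (G.induce T).ConnectedComponent, Nat.card C.supp = k) :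
    maxCompCard G T = k := by
  have : (Set.range fun C : (G.induce T).ConnectedComponent => Nat.card C.supp) = {k} :=
    Set.range_eq_singleton h
  rw [maxCompCard, this, csSup_singleton]

lemma uvat_le_div [Fintype V] [DecidableEq V] {G : SimpleGraph V} {S : Finset V} (hS : S.Nonempty)
    (hlt : maxCompCard G (S : Set V)ᶜ < #Sᶜ) :
    uvat G ≤ #S / ((#Sᶜ : ℝ) - maxCompCard G (S : Set V)ᶜ) := by
  refine csInf_le ⟨0, ?_⟩ ⟨S, hS, hlt, rfl⟩
  rintro x ⟨S', -, hlt', rfl⟩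
  have : (maxCompCard G (S' : Set V)ᶜ : ℝ) < #S'ᶜ := by exact_mod_cast hlt'
  exact div_nonneg (Nat.cast_nonneg _) (sub_nonneg.2 this.le)

end SimpleGraph

section Cobip

variable {α β : Type*} {E : α → β → Prop}

lemma exists_not_rel_of_cobip_connected [Nonempty α] [Nonempty β] (h : (cobip E).Connected) :
    ∃ a b, ¬E a b := by
  by_contra! hE
  obtain ⟨a⟩ := ‹Nonempty α›
  obtain ⟨b⟩ := ‹Nonempty β›
  have := (h.preconnected (.inl a) (.inr b)).eq_of_forall_adj (f := Sum.isLeft) <| by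
    rintro (a | b) (a' | b') hadj
    exacts [rfl, absurd (hE a b') hadj, absurd (hE a' b) hadj, rfl]
  simp at this

lemma natCard_isLeft_disjSum_eq {A : Finset α} {B : Finset β} {k : ℕ} (hA : #A = k)
    (hB : #B = k) (c : Bool) :
    Nat.card {y : (A.disjSum B : Set (α ⊕ β)) // y.1.isLeft = c} = k := by
  let e : {y : (A.disjSum B : Set (α ⊕ β)) // y.1.isLeft = c} ≃
      ((A.disjSum B).filter (·.isLeft = c)) :=
    (Equiv.subtypeSubtypeEquivSubtypeInter (· ∈ (A.disjSum B : Set (α ⊕ β))) (·.isLeft = c)).trans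
      (Equiv.subtypeEquivRight fun _ => by simp)
  rw [Nat.card_congr e, Nat.card_eq_finsetCard]
  cases c
  · rw [← hB, ← card_map (s := B) (.inr (α := α))]
    congr 1
    ext (a | b) <;> rw [mem_filter] <;> simp
  · rw [← hA, ← card_map (s := A) (.inl (β := β))]
    congr 1
    ext (a | b) <;> rw [mem_filter] <;> simp

variable {A : Finset α} {B : Finset β}

lemma cobip_induce_disjSum_reachable_iff (hAB : ∀ a ∈ A, ∀ b ∈ B, E a b)
    {x y : (A.disjSum B : Set (α ⊕ β))} :
    ((cobip E).induce (A.disjSum B : Set (α ⊕ β))).Reachable x y ↔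
      x.1.isLeft = y.1.isLeft := by
  refine ⟨fun h => h.eq_of_forall_adj (f := fun z : (A.disjSum B : Set (α ⊕ β)) => z.1.isLeft) ?_,
    fun hside => ?_⟩
  · rintro ⟨a | b, hx⟩ ⟨a' | b', hy⟩ hadj
    all_goals simp only [mem_coe, inl_mem_disjSum, inr_mem_disjSum] at hx hy
    exacts [rfl, absurd (hAB a hx b' hy) hadj, absurd (hAB a' hy b hx) hadj, rfl]
  · obtain rfl | hne := eq_or_ne x y
    · rfl
    refine Adj.reachable ?_
    obtain ⟨a | b, hx⟩ := x <;> obtain ⟨a' | b', hy⟩ := y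
    all_goals simp_all [cobip]

lemma card_supp_cobip_induce_disjSum (hAB : ∀ a ∈ A, ∀ b ∈ B, E a b) {k : ℕ} (hA : #A = k)
    (hB : #B = k) (C : ((cobip E).induce (A.disjSum B : Set (α ⊕ β))).ConnectedComponent) :
    Nat.card C.supp = k := by
  induction C using ConnectedComponent.ind with | h x => ?_
  have hsupp : (((cobip E).induce _).connectedComponentMk x).supp =
      {y | y.1.isLeft = x.1.isLeft} := by
    ext y
    simp [cobip_induce_disjSum_reachable_iff hAB]
  rw [hsupp, Set.coe_ofPred]
  exact natCard_isLeft_disjSum_eq hA hB _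

lemma maxCompCard_cobip_disjSum [Fintype α] [Fintype β] (hAB : ∀ a ∈ A, ∀ b ∈ B, E a b)
    {k : ℕ} (hk : 1 ≤ k) (hA : #A = k) (hB : #B = k) :
    maxCompCard (cobip E) (A.disjSum B : Set (α ⊕ β)) = k := by
  obtain ⟨a, ha⟩ : A.Nonempty := card_pos.1 (by omega)
  have : Nonempty (A.disjSum B : Set (α ⊕ β)) := ⟨⟨.inl a, by simpa using ha⟩⟩
  exact maxCompCard_eq_of_forall_card_supp_eq (card_supp_cobip_induce_disjSum hAB hA hB)

end Cobip

theorem uvat_cobip_le_general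
    {α β : Type*} [Fintype α] [Fintype β] [DecidableEq α] [DecidableEq β]
    (n : ℕ) (hcard1 : Fintype.card α = n) (hcard2 : Fintype.card β = n)
    (E : α → β → Prop) (hconn : (cobip E).Connected)
    (k : ℕ) (hk : isBalancedClique E k)
    (hk1 : 1 ≤ k) :
    uvat (cobip E) ≤ 2 * ((n : ℝ) / (k : ℝ) - 1) := by
  obtain ⟨A, B, hA, hB, hAB⟩ := hk
  have hkn : k < n := by
    have : k ≤ n := hA ▸ hcard1 ▸ card_le_univ A
    refine this.lt_of_ne fun hkn => ?_
    have : Nonempty α := Fintype.card_pos_iff.1 (by omega)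
    have : Nonempty β := Fintype.card_pos_iff.1 (by omega)
    obtain ⟨a, b, hab⟩ := exists_not_rel_of_cobip_connected hconn
    exact hab (hAB a (eq_univ_of_card A (by omega) ▸ mem_univ a) b
      (eq_univ_of_card B (by omega) ▸ mem_univ b))
  set S : Finset (α ⊕ β) := (A.disjSum B)ᶜ
  have hSc : (S : Set (α ⊕ β))ᶜ = A.disjSum B := by simp [S]
  have hcardSc : #Sᶜ = 2 * k := by rw [compl_compl, card_disjSum, hA, hB, two_mul]
  have hcardS : #S = 2 * n - 2 * k := by
    rw [card_compl, card_disjSum, Fintype.card_sum, hA, hB, hcard1, hcard2]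
    omega
  have hmax := maxCompCard_cobip_disjSum hAB hk1 hA hB
  rw [← hSc] at hmax
  refine (uvat_le_div (S := S) (card_pos.1 (by omega)) (by omega)).trans_eq ?_
  rw [hcardS, hcardSc, hmax, Nat.cast_sub (by omega)]
  have hk0 : (k : ℝ) ≠ 0 := Nat.cast_ne_zero.2 (by omega)
  push_cast
  field_simp
  ring

/-- Upper bound of part (II) of the main lemma: if `k ≥ 1` is the size of a maximum
balanced bipartite clique of a bipartite graph `G` with parts of size `n` and at least
one edge, and the co-bipartite complement of `G` is connected, then `τ̂(Ḡ) ≤ 2(n/k - 1)`. -/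
theorem uvat_cobip_le
    {α β : Type*} [Fintype α] [Fintype β] [DecidableEq α] [DecidableEq β]
    (n : ℕ) (hcard1 : Fintype.card α = n) (hcard2 : Fintype.card β = n)
    (E : α → β → Prop) (hE : ∃ a b, E a b) (hconn : (cobip E).Connected)
    (k : ℕ) (hk : isBalancedClique E k) (hkmax : ∀ m, isBalancedClique E m → m ≤ k)
    (hk1 : 1 ≤ k) :
    uvat (cobip E) ≤ 2 * ((n : ℝ) / (k : ℝ) - 1) :=
  uvat_cobip_le_general n hcard1 hcard2 E hconn k hk hk1
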